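/- arXiv:2001.10780 — 6 statements merged into one kernel-verified Lean document; each statement's English description precedes it below -/
import Mathlib

section
/- Let H be a Hilbert space, and let V and W be isometries on H (V*V = 1, W*W = 1) satisfying V* W = conj(λ) W V* for some λ in the unit circle of ℂ. Then V W = λ W V. -/
open ContinuousLinearMap

theorem stmt0 {H : Type*} [NormedAddCommGroup H] [InnerProductSpace ℂ H] [CompleteSpace H]
    (V W : H →L[ℂ] H) (lam : ℂ)
    (hV : adjoint V * V = 1) (hW : adjoint W * W = 1)
    (hlam : ‖lam‖ = 1)
    (h : adjoint V * W = (starRingEnd ℂ) lam • (W * adjoint V)) :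
    V * W = lam • (W * V) := by
  have hsV : star V * V = 1 := by rwa [star_eq_adjoint]
  have hsW : star W * W = 1 := by rwa [star_eq_adjoint]
  have h1 : star V * W = (starRingEnd ℂ) lam • (W * star V) := by rwa [star_eq_adjoint]
  have h2 : star W * V = lam • (V * star W) := by
    have := congrArg star h1
    simpa [star_smul, star_mul, star_star, Complex.conj_conj] using this
  have hll : (starRingEnd ℂ) lam * lam = 1 := by
    rw [Complex.conj_mul']
    norm_cast
    simp [hlam]
  have hsV2 : ∀ T : H →L[ℂ] H, star V * (V * T) = T := fun T => by
    rw [← mul_assoc, hsV, one_mul]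
  have hsW2 : ∀ T : H →L[ℂ] H, star W * (W * T) = T := fun T => by
    rw [← mul_assoc, hsW, one_mul]
  have h1' : ∀ T : H →L[ℂ] H, star V * (W * T) = (starRingEnd ℂ) lam • (W * (star V * T)) :=
    fun T => by rw [← mul_assoc, h1, smul_mul_assoc, mul_assoc]
  have h2' : ∀ T : H →L[ℂ] H, star W * (V * T) = lam • (V * (star W * T)) :=
    fun T => by rw [← mul_assoc, h2, smul_mul_assoc, mul_assoc]
  have key : star (V * W - lam • (W * V)) * (V * W - lam • (W * V)) = 0 := by
    simp only [star_sub, star_smul, star_mul, sub_mul, mul_sub, smul_mul_assoc, mul_smul_comm,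
      smul_smul, mul_assoc, h1', h2', hsV, hsW, hsV2, hsW2, hll, one_smul, mul_one,
      starRingEnd_self_apply, star_star]
    simp [smul_smul, hll, mul_comm lam ((starRingEnd ℂ) lam)]
  have := (CStarRing.star_mul_self_eq_zero_iff _).mp key
  rw [sub_eq_zero] at this
  exact this
end

section
/- Let T = (T_1, T_2) be a pair of row contractions on H with commuting completely positive maps Φ_1, Φ_2 (where Φ_i(X) = ∑_s T_{i,s} X T_{i,s}*), such that T_1 is pure, i.e. Φ_1^m(1) → 0 strongly as m → ∞. If (id − Φ_1)((id − Φ_2)(1)) ≥ 0, then (id − Φ_2)(1) ≥ 0. -/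
/-!
Put `Y := 1 - Φ₂(1)`. Being self-adjoint, `Y ≥ -‖Y‖`, so monotonicity of `Φ₁` together with
`Φ₁(Y) ≤ Y` gives `-‖Y‖ Φ₁^m(1) ≤ Φ₁^m(Y) ≤ Y` for every `m`. By purity the left side tends
strongly to `0`, and the Loewner order is closed under strong limits.
-/

open ContinuousLinearMap Filter Topology

namespace ContinuousLinearMap

variable {𝕜 E : Type*} [RCLike 𝕜] [NormedAddCommGroup E] [InnerProductSpace 𝕜 E]

theorem le_of_tendsto_apply {α : Type*} {l : Filter α} [l.NeBot] {A : α → E →L[𝕜] E}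
    {B C : E →L[𝕜] E} (hA : ∀ x, Tendsto (fun m => A m x) l (𝓝 (C x)))
    (hle : ∀ m, A m ≤ B) : C ≤ B := by
  have hlim : ∀ x y, Tendsto (fun m => inner 𝕜 ((B - A m) x) y) l (𝓝 (inner 𝕜 ((B - C) x) y)) :=
    fun x y => ((tendsto_const_nhds.sub (hA x)).inner tendsto_const_nhds)
  refine isPositive_def.2 ⟨fun x y => ?_, fun x => ?_⟩
  · have hlim' : Tendsto (fun m => inner 𝕜 x ((B - A m) y)) l (𝓝 (inner 𝕜 x ((B - C) y))) :=
      tendsto_const_nhds.inner (tendsto_const_nhds.sub (hA y))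
    exact tendsto_nhds_unique ((hlim x y).congr fun m => (hle m).isSymmetric x y) hlim'
  · exact ge_of_tendsto (RCLike.continuous_re.continuousAt.tendsto.comp (hlim x x))
      (Eventually.of_forall fun m => (hle m).re_inner_nonneg_left x)

theorem nonneg_of_map_le_self {Φ : (E →L[𝕜] E) → E →L[𝕜] E} (hΦ : Monotone Φ)
    {Y Z : E →L[𝕜] E} (hY : Φ Y ≤ Y) (hZ : Z ≤ Y)
    (hlim : ∀ x, Tendsto (fun m => (Φ^[m] Z) x) atTop (𝓝 0)) : 0 ≤ Y := by
  refine le_of_tendsto_apply (A := fun m => Φ^[m] Z) hlim fun m => ?_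
  calc Φ^[m] Z ≤ Φ^[m] Y := hΦ.iterate m hZ
    _ ≤ id^[m] Y := Function.Commute.id_right.iterate_le_of_map_le hΦ monotone_id hY m
    _ = Y := by rw [Function.iterate_id, id]

variable [CompleteSpace E] {ι : Type*} [Fintype ι]

noncomputable def sumConjAdjoint (T : ι → E →L[𝕜] E) : Module.End 𝕜 (E →L[𝕜] E) where
  toFun X := ∑ s, T s * X * adjoint (T s)
  map_add' X Y := by simp only [mul_add, add_mul, Finset.sum_add_distrib]
  map_smul' c X := by simp only [mul_smul_comm, smul_mul_assoc, Finset.smul_sum, RingHom.id_apply]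

theorem sumConjAdjoint_monotone (T : ι → E →L[𝕜] E) : Monotone (sumConjAdjoint T) := by
  intro X Y hXY
  rw [le_def, ← map_sub]
  exact isPositive_sum _ fun s _ => hXY.conj_adjoint (T s)

end ContinuousLinearMap

theorem stmt5_general {H : Type*} [NormedAddCommGroup H] [InnerProductSpace ℂ H] [CompleteSpace H]
    (n₁ n₂ : ℕ) (T₁ : Fin n₁ → H →L[ℂ] H) (T₂ : Fin n₂ → H →L[ℂ] H)
    (hpure : ∀ x : H, Tendsto
      (fun m => ((fun X : H →L[ℂ] H => ∑ s, T₁ s * X * adjoint (T₁ s))^[m] 1) x)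
      atTop (nhds 0))
    (hdef : (((1 : H →L[ℂ] H) - ∑ t, T₂ t * adjoint (T₂ t)) -
        ∑ s, T₁ s * ((1 : H →L[ℂ] H) - ∑ t, T₂ t * adjoint (T₂ t)) * adjoint (T₁ s)).IsPositive) :
    ((1 : H →L[ℂ] H) - ∑ t, T₂ t * adjoint (T₂ t)).IsPositive := by
  set Y : H →L[ℂ] H := 1 - ∑ t, T₂ t * adjoint (T₂ t)
  have hYsa : IsSelfAdjoint Y := (IsSelfAdjoint.one _).sub <| isSelfAdjoint_sum _ fun t _ => by
    simpa only [star_eq_adjoint] using IsSelfAdjoint.mul_star_self (T₂ t)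
  have hlower : -((‖Y‖ : ℂ) • (1 : H →L[ℂ] H)) ≤ Y := by
    simpa only [Algebra.algebraMap_eq_smul_one, Complex.coe_smul] using
      hYsa.neg_algebraMap_norm_le_self
  rw [← nonneg_iff_isPositive]
  refine nonneg_of_map_le_self (sumConjAdjoint_monotone T₁) hdef hlower fun x => ?_
  convert ((hpure x).const_smul (‖Y‖ : ℂ)).neg using 2 with m
  · rw [← Module.End.pow_apply, map_neg, map_smul, Module.End.pow_apply]
    rfl
  · simp only [smul_zero, neg_zero]

theorem stmt5 {H : Type*} [NormedAddCommGroup H] [InnerProductSpace ℂ H] [CompleteSpace H]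
    (n₁ n₂ : ℕ) (T₁ : Fin n₁ → H →L[ℂ] H) (T₂ : Fin n₂ → H →L[ℂ] H)
    (hrow1 : ((1 : H →L[ℂ] H) - ∑ s, T₁ s * adjoint (T₁ s)).IsPositive)
    (hrow2 : ((1 : H →L[ℂ] H) - ∑ t, T₂ t * adjoint (T₂ t)).IsPositive)
    (hcomm : ∀ X : H →L[ℂ] H,
      (∑ s, T₁ s * (∑ t, T₂ t * X * adjoint (T₂ t)) * adjoint (T₁ s)) =
      (∑ t, T₂ t * (∑ s, T₁ s * X * adjoint (T₁ s)) * adjoint (T₂ t)))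
    (hpure : ∀ x : H, Tendsto
      (fun m => ((fun X : H →L[ℂ] H => ∑ s, T₁ s * X * adjoint (T₁ s))^[m] 1) x)
      atTop (nhds 0))
    (hdef : (((1 : H →L[ℂ] H) - ∑ t, T₂ t * adjoint (T₂ t)) -
        ∑ s, T₁ s * ((1 : H →L[ℂ] H) - ∑ t, T₂ t * adjoint (T₂ t)) * adjoint (T₁ s)).IsPositive) :
    ((1 : H →L[ℂ] H) - ∑ t, T₂ t * adjoint (T₂ t)).IsPositive :=
  stmt5_general n₁ n₂ T₁ T₂ hpure hdef
end

section
/- Let V_1,…,V_n be isometries on a Hilbert space K with orthogonal ranges (V_s* V_t = δ_{st} 1). Let P^{(s)} := SOT-lim_{p→∞} ∑_{|α|≤p} V_α (1 − ∑_m V_m V_m*) V_α* and P^{(c)} := SOT-lim_{q→∞} ∑_{|α|=q} V_α V_α*, where α ranges over words in n letters and V_α denotes the corresponding product. Then P^{(s)} + P^{(c)} = 1 and P^{(s)} P^{(c)} = 0. -/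
/-!
With `Q_q := ∑_{|α| = q} V_α V_α*`, the defect terms of words of length `q` sum to
`Q_q - Q_{q+1}`, so the partial sums defining `P^{(s)}` telescope to `1 - Q_{p+1}` and
`P^{(s)} = 1 - P^{(c)}`. Orthogonality of the ranges gives `Q_q Q_r = Q_r` for `q ≤ r`; this
survives the strong limit, so `P^{(c)}` is idempotent and
`P^{(s)} P^{(c)} = P^{(c)} - P^{(c)}² = 0`.
-/

open ContinuousLinearMap Filter

/-- The product `V_{α 0} ∘ V_{α 1} ∘ ⋯` associated with a word `α` of length `q`. -/
noncomputable def wordProd {K : Type*} [NormedAddCommGroup K] [InnerProductSpace ℂ K]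
    {n q : ℕ} (V : Fin n → K →L[ℂ] K) (α : Fin q → Fin n) : K →L[ℂ] K :=
  (List.ofFn fun j => V (α j)).prod

theorem ContinuousLinearMap.isIdempotentElem_of_tendsto {R M : Type*} [Semiring R]
    [TopologicalSpace M] [T2Space M] [AddCommMonoid M] [Module R M]
    {Q : ℕ → M →L[R] M} {P : M →L[R] M}
    (hQ : ∀ x, Tendsto (fun q => Q q x) atTop (nhds (P x)))
    (hmul : ∀ q r, q ≤ r → Q q * Q r = Q r) : IsIdempotentElem P := by
  have hfix : ∀ q x, Q q (P x) = P x := fun q x =>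
    tendsto_nhds_unique (((Q q).continuous.tendsto _).comp (hQ x)) <|
      (hQ x).congr' <| (eventually_ge_atTop q).mono fun r hr => by
        rw [Function.comp_apply, ← mul_apply_eq_comp, hmul q r hr]
  ext x
  exact tendsto_nhds_unique (hQ (P x)) (by simp only [hfix, tendsto_const_nhds])

section WordProjections

variable {K : Type*} [NormedAddCommGroup K] [InnerProductSpace ℂ K] {n : ℕ}
  (V : Fin n → K →L[ℂ] K)

@[simp]
lemma wordProd_zero (α : Fin 0 → Fin n) : wordProd V α = 1 := by
  simp [wordProd]

lemma wordProd_cons {q : ℕ} (m : Fin n) (α : Fin q → Fin n) :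
    wordProd V (Fin.cons m α) = V m * wordProd V α := by
  simp [wordProd, List.ofFn_succ]

lemma wordProd_snoc {q : ℕ} (α : Fin q → Fin n) (m : Fin n) :
    wordProd V (Fin.snoc α m) = wordProd V α * V m := by
  rw [wordProd, List.ofFn_succ', List.prod_concat]
  simp [wordProd]

variable [CompleteSpace K]

/-- The projection onto the closed span of the ranges of the words of length `q`. -/
noncomputable def wordProj (q : ℕ) : K →L[ℂ] K :=
  ∑ α : Fin q → Fin n, wordProd V α * star (wordProd V α)

@[simp]
lemma wordProj_zero : wordProj V 0 = 1 := by
  simp [wordProj]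

lemma wordProj_succ (q : ℕ) :
    wordProj V (q + 1) = ∑ m, V m * wordProj V q * star (V m) := by
  rw [wordProj, ← (Fin.consEquiv fun _ => Fin n).sum_comp, Fintype.sum_prod_type]
  simp only [wordProj, Finset.mul_sum, Finset.sum_mul]
  refine Finset.sum_congr rfl fun m _ => Finset.sum_congr rfl fun α _ => ?_
  change wordProd V (Fin.cons m α) * star (wordProd V (Fin.cons m α)) = _
  simp only [wordProd_cons, star_mul, mul_assoc]

lemma wordProj_succ' (q : ℕ) :
    wordProj V (q + 1) = ∑ α : Fin q → Fin n,
      wordProd V α * (∑ m, V m * star (V m)) * star (wordProd V α) := by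
  rw [wordProj, ← (Fin.snocEquiv fun _ => Fin n).sum_comp, Fintype.sum_prod_type,
    Finset.sum_comm]
  simp only [Finset.mul_sum, Finset.sum_mul]
  refine Finset.sum_congr rfl fun α _ => Finset.sum_congr rfl fun m _ => ?_
  change wordProd V (Fin.snoc α m) * star (wordProd V (Fin.snoc α m)) = _
  simp only [wordProd_snoc, star_mul, mul_assoc]

lemma sum_defect_eq_wordProj_sub (q : ℕ) :
    ∑ α : Fin q → Fin n, wordProd V α * (1 - ∑ m, V m * star (V m)) * star (wordProd V α) =
      wordProj V q - wordProj V (q + 1) := by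
  rw [wordProj_succ', wordProj, ← Finset.sum_sub_distrib]
  simp only [mul_sub, sub_mul, mul_one]

lemma sum_range_defect_eq_one_sub_wordProj (p : ℕ) :
    ∑ q ∈ Finset.range (p + 1), ∑ α : Fin q → Fin n,
      wordProd V α * (1 - ∑ m, V m * star (V m)) * star (wordProd V α) =
      1 - wordProj V (p + 1) := by
  simp only [sum_defect_eq_wordProj_sub, Finset.sum_range_sub', wordProj_zero]

variable {V} (hV : ∀ s t, star (V s) * V t = if s = t then 1 else 0)
include hV

lemma conj_mul_conj (A B : K →L[ℂ] K) (m s : Fin n) :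
    V m * A * star (V m) * (V s * B * star (V s)) =
      if m = s then V m * (A * B) * star (V m) else 0 := by
  calc V m * A * star (V m) * (V s * B * star (V s))
      = V m * A * (star (V m) * V s) * B * star (V s) := by simp only [mul_assoc]
    _ = _ := by split_ifs with h <;> simp [hV, h, mul_assoc]

lemma wordProj_mul_of_le {q r : ℕ} (hqr : q ≤ r) :
    wordProj V q * wordProj V r = wordProj V r := by
  induction q generalizing r with
  | zero => rw [wordProj_zero, one_mul]
  | succ q ih =>
    obtain ⟨r, rfl⟩ := Nat.exists_eq_add_of_le' (Nat.zero_lt_of_lt hqr)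
    simp only [wordProj_succ, Finset.sum_mul_sum, conj_mul_conj hV, Finset.sum_ite_eq,
      Finset.mem_univ, if_true, ih (Nat.le_of_succ_le_succ hqr)]

end WordProjections

theorem stmt7 {K : Type*} [NormedAddCommGroup K] [InnerProductSpace ℂ K] [CompleteSpace K]
    (n : ℕ) (V : Fin n → K →L[ℂ] K)
    (horth : ∀ s t, adjoint (V s) * V t = if s = t then 1 else 0)
    (Ps Pc : K →L[ℂ] K)
    (hPs : ∀ x : K, Tendsto (fun p : ℕ =>
      (∑ q ∈ Finset.range (p + 1), ∑ α : Fin q → Fin n,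
        wordProd V α * ((1 : K →L[ℂ] K) - ∑ m, V m * adjoint (V m)) *
          adjoint (wordProd V α)) x)
      atTop (nhds (Ps x)))
    (hPc : ∀ x : K, Tendsto (fun q : ℕ =>
      (∑ α : Fin q → Fin n, wordProd V α * adjoint (wordProd V α)) x)
      atTop (nhds (Pc x))) :
    Ps + Pc = 1 ∧ Ps * Pc = 0 := by
  simp only [← star_eq_adjoint, sum_range_defect_eq_one_sub_wordProj] at horth hPs hPc
  change ∀ x, Tendsto (fun q => wordProj V q x) atTop (nhds (Pc x)) at hPc
  have hPs_eq : Ps = 1 - Pc := by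
    ext x
    refine tendsto_nhds_unique (hPs x) ?_
    simpa using ((hPc x).comp (tendsto_add_atTop_nat 1)).const_sub x
  have hPc_idem : IsIdempotentElem Pc :=
    isIdempotentElem_of_tendsto hPc fun _ _ => wordProj_mul_of_le horth
  subst hPs_eq
  exact ⟨sub_add_cancel 1 Pc, by rw [sub_mul, one_mul, hPc_idem.eq, sub_self]⟩
end

section
/- Let T = (T_{1,s})_{s≤n₁}, (T_{2,t})_{t≤n₂} be two families of operators on H that are doubly Λ-commuting: T_{1,s}* T_{2,t} = conj(λ_{st}) T_{2,t} T_{1,s}* and T_{1,s} T_{2,t} = λ_{st} T_{2,t} T_{1,s} for unimodular λ_{st}, and suppose each row is a contraction: ∑_s T_{i,s} T_{i,s}* ≤ 1 for i = 1, 2. Then (id − Φ_1)((id − Φ_2)(1)) = (1 − ∑_s T_{1,s} T_{1,s}*)(1 − ∑_t T_{2,t} T_{2,t}*) ≥ 0, where Φ_i(X) := ∑ T_{i,s} X T_{i,s}*. -/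
/-!
The Λ-commutation relations with unimodular `λ` cancel in pairs: `a b b* a* = (a b)(a b)*`
picks up `λ λ̄ = 1`, and so does `a a* b b* = a (a* b) b*`. Hence every `T₁ₛT₁ₛ*` commutes
with every `T₂ₜT₂ₜ*` and `Φ₁(Φ₂(1)) = Φ₂(1) Φ₁(1)`, so the defect factors as
`(1 - Φ₁(1)) (1 - Φ₂(1))`, a product of commuting positive operators, which is positive.
-/

open ContinuousLinearMap

section LambdaCommuting

variable {R A : Type*} [CommRing R] [StarRing R] [Ring A] [StarRing A] [Algebra R A]

lemma mul_mul_star_mul_star_of_mul_eq_smul [StarModule R A] {a b : A} {c : R}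
    (hc : star c * c = 1) (h : a * b = c • (b * a)) :
    a * (b * star b) * star a = b * (a * star a) * star b := by
  calc a * (b * star b) * star a = a * b * star (a * b) := by simp only [star_mul, mul_assoc]
    _ = (c * star c) • (b * a * star (b * a)) := by
      rw [h, star_smul, smul_mul_smul_comm]
    _ = b * (a * star a) * star b := by
      rw [mul_comm, hc, one_smul, star_mul]; noncomm_ring

lemma mul_star_mul_mul_star_of_star_mul_eq_smul {a b : A} {c : R} (hc : star c * c = 1)
    (h₁ : star a * b = star c • (b * star a)) (h₂ : a * b = c • (b * a)) :
    a * star a * (b * star b) = b * (a * star a) * star b := by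
  calc a * star a * (b * star b) = a * (star a * b) * star b := by noncomm_ring
    _ = star c • (a * b * (star a * star b)) := by
      rw [h₁, mul_smul_comm, smul_mul_assoc]; noncomm_ring
    _ = b * (a * star a) * star b := by
      rw [h₂, smul_mul_assoc, smul_smul, hc, one_smul]; noncomm_ring

lemma commute_mul_star_of_star_mul_eq_smul {a b : A} {c : R} (hc : star c * c = 1)
    (h₁ : star a * b = star c • (b * star a)) (h₂ : a * b = c • (b * a)) :
    Commute (a * star a) (b * star b) := by
  have h := mul_star_mul_mul_star_of_star_mul_eq_smul hc h₁ h₂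
  have h_star := congrArg star h
  simp only [star_mul, star_star, mul_assoc] at h h_star
  simp only [Commute, SemiconjBy, mul_assoc, h, h_star]

variable {ι κ : Type*} [Fintype ι] [Fintype κ] {a : ι → A} {b : κ → A} {c : ι → κ → R}

lemma commute_sum_mul_star (hc : ∀ s t, star (c s t) * c s t = 1)
    (h₁ : ∀ s t, star (a s) * b t = star (c s t) • (b t * star (a s)))
    (h₂ : ∀ s t, a s * b t = c s t • (b t * a s)) :
    Commute (∑ s, a s * star (a s)) (∑ t, b t * star (b t)) :=
  Commute.sum_left _ _ _ fun s _ ↦ Commute.sum_right _ _ _ fun t _ ↦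
    commute_mul_star_of_star_mul_eq_smul (hc s t) (h₁ s t) (h₂ s t)

lemma sum_mul_sum_mul_star_mul_star [StarModule R A] (hc : ∀ s t, star (c s t) * c s t = 1)
    (h₁ : ∀ s t, star (a s) * b t = star (c s t) • (b t * star (a s)))
    (h₂ : ∀ s t, a s * b t = c s t • (b t * a s)) :
    ∑ s, a s * (∑ t, b t * star (b t)) * star (a s) =
      (∑ s, a s * star (a s)) * ∑ t, b t * star (b t) := by
  simp only [Finset.mul_sum, Finset.sum_mul]
  rw [Finset.sum_comm]
  refine Finset.sum_congr rfl fun t _ ↦ Finset.sum_congr rfl fun s _ ↦ ?_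
  rw [mul_mul_star_mul_star_of_mul_eq_smul (hc s t) (h₂ s t),
    ← mul_star_mul_mul_star_of_star_mul_eq_smul (hc s t) (h₁ s t) (h₂ s t)]

lemma sub_sum_mul_one_sub_mul_star [StarModule R A] (hc : ∀ s t, star (c s t) * c s t = 1)
    (h₁ : ∀ s t, star (a s) * b t = star (c s t) • (b t * star (a s)))
    (h₂ : ∀ s t, a s * b t = c s t • (b t * a s)) :
    (1 - ∑ t, b t * star (b t)) - ∑ s, a s * (1 - ∑ t, b t * star (b t)) * star (a s) =
      (1 - ∑ s, a s * star (a s)) * (1 - ∑ t, b t * star (b t)) := by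
  simp only [mul_sub, sub_mul, mul_one, Finset.sum_sub_distrib,
    sum_mul_sum_mul_star_mul_star hc h₁ h₂]
  noncomm_ring

end LambdaCommuting

theorem stmt11 {H : Type*} [NormedAddCommGroup H] [InnerProductSpace ℂ H] [CompleteSpace H]
    (n₁ n₂ : ℕ) (T₁ : Fin n₁ → H →L[ℂ] H) (T₂ : Fin n₂ → H →L[ℂ] H)
    (lam : Fin n₁ → Fin n₂ → ℂ) (hlam : ∀ s t, ‖lam s t‖ = 1)
    (h1 : ∀ s t, adjoint (T₁ s) * T₂ t = (starRingEnd ℂ) (lam s t) • (T₂ t * adjoint (T₁ s)))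
    (h2 : ∀ s t, T₁ s * T₂ t = lam s t • (T₂ t * T₁ s))
    (hrow1 : ((1 : H →L[ℂ] H) - ∑ s, T₁ s * adjoint (T₁ s)).IsPositive)
    (hrow2 : ((1 : H →L[ℂ] H) - ∑ t, T₂ t * adjoint (T₂ t)).IsPositive) :
    (((1 : H →L[ℂ] H) - ∑ t, T₂ t * adjoint (T₂ t)) -
        ∑ s, T₁ s * ((1 : H →L[ℂ] H) - ∑ t, T₂ t * adjoint (T₂ t)) * adjoint (T₁ s)) =
      ((1 : H →L[ℂ] H) - ∑ s, T₁ s * adjoint (T₁ s)) *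
        ((1 : H →L[ℂ] H) - ∑ t, T₂ t * adjoint (T₂ t)) ∧
    (((1 : H →L[ℂ] H) - ∑ s, T₁ s * adjoint (T₁ s)) *
        ((1 : H →L[ℂ] H) - ∑ t, T₂ t * adjoint (T₂ t))).IsPositive := by
  have hunit : ∀ s t, star (lam s t) * lam s t = 1 := fun s t ↦ by
    rw [RCLike.star_def, Complex.conj_mul', hlam]; norm_num
  simp only [← star_eq_adjoint] at h1 hrow1 hrow2 ⊢
  rw [← nonneg_iff_isPositive]
  refine ⟨sub_sum_mul_one_sub_mul_star hunit h1 h2, Commute.mul_nonneg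
    ((nonneg_iff_isPositive _).mpr hrow1) ((nonneg_iff_isPositive _).mpr hrow2) ?_⟩
  exact (Commute.one_right _).sub_right
    ((Commute.one_left _).sub_left (commute_sum_mul_star hunit h1 h2))
end

section
/- Let T_1,…,T_k be row contractions on H with pairwise commuting maps Φ_i(X) = ∑_s T_{i,s} X T_{i,s}*, and suppose ∑_{i=1}^k ∑_s T_{i,s} T_{i,s}* ≤ 1. Then (id − Φ_1)∘⋯∘(id − Φ_k)(1) ≥ 1 − Φ_1(1) − ⋯ − Φ_k(1) ≥ 0. -/
/-!
Write `S = Φ_1(1) + ⋯ + Φ_k(1)` and `D_m = (id - Φ_m)(D_{m-1})`, `D_0 = 1`.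
By induction on `m`, `1 - (Φ_1(1) + ⋯ + Φ_m(1)) ≤ D_m ≤ 1`: since each `Φ_i` is a
positive map, `D_{m-1} ≤ 1` gives `Φ_m(D_{m-1}) ≤ Φ_m(1)`, which keeps the lower bound, while
`D_{m-1} ≥ 1 - S ≥ 0` gives `Φ_m(D_{m-1}) ≥ 0`, which keeps the upper bound.
-/

open ContinuousLinearMap

section OrderedAddCommGroup

variable {A : Type*} [AddCommGroup A] [PartialOrder A] [IsOrderedAddMonoid A]

theorem sub_sum_le_iterate_sub_map_and_le {k : ℕ} (Φ : Fin k → A →+o A) (u : A)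
    (hu : 0 ≤ u) (hsum : ∑ i, Φ i u ≤ u) (D : ℕ → A) (hD0 : D 0 = u)
    (hD : ∀ j : Fin k, D (j + 1) = D j - Φ j (D j)) :
    u - ∑ i, Φ i u ≤ D k ∧ D k ≤ u := by
  induction k with
  | zero => simp [hD0]
  | succ k ih =>
    rw [Fin.sum_univ_castSucc] at hsum ⊢
    have hlast : 0 ≤ Φ (Fin.last k) u := by simpa using (Φ (Fin.last k)).monotone' hu
    obtain ⟨hlower, hupper⟩ :=
      ih (fun i => Φ i.castSucc) ((le_add_of_nonneg_right hlast).trans hsum)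
      (fun j => by simpa using hD j.castSucc)
    have hDk : D (k + 1) = D k - Φ (Fin.last k) (D k) := by simpa using hD (Fin.last k)
    have hDk_nonneg : 0 ≤ D k := calc
      0 ≤ u - (∑ i : Fin k, Φ i.castSucc u + Φ (Fin.last k) u) := sub_nonneg.2 hsum
      _ ≤ u - ∑ i : Fin k, Φ i.castSucc u := sub_le_sub_left (le_add_of_nonneg_right hlast) u
      _ ≤ D k := hlower
    have hΦ_nonneg : 0 ≤ Φ (Fin.last k) (D k) := by
      simpa using (Φ (Fin.last k)).monotone' hDk_nonneg
    rw [hDk, ← sub_sub]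
    exact ⟨sub_le_sub hlower ((Φ (Fin.last k)).monotone' hupper),
      (sub_le_self _ hΦ_nonneg).trans hupper⟩

end OrderedAddCommGroup

section StarOrderedRing

variable {R : Type*} [NonUnitalRing R] [PartialOrder R] [StarRing R] [StarOrderedRing R]

def conjSum {ι : Type*} [Fintype ι] (T : ι → R) : R →+o R where
  toFun X := ∑ s, T s * X * star (T s)
  map_zero' := by simp
  map_add' X Y := by simp only [mul_add, add_mul, Finset.sum_add_distrib]
  monotone' _ _ h := Finset.sum_le_sum fun s _ => star_right_conjugate_le_conjugate h (T s)

theorem conjSum_apply {ι : Type*} [Fintype ι] (T : ι → R) (X : R) :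
    conjSum T X = ∑ s, T s * X * star (T s) := rfl

end StarOrderedRing

theorem stmt12_general {H : Type*} [NormedAddCommGroup H] [InnerProductSpace ℂ H] [CompleteSpace H]
    (k : ℕ) (n : Fin k → ℕ) (T : (i : Fin k) → Fin (n i) → H →L[ℂ] H)
    -- ∑_i Φ_i(1) ≤ 1
    (hsum : ((1 : H →L[ℂ] H) - ∑ i, ∑ s, T i s * adjoint (T i s)).IsPositive)
    -- D j is (id - Φ_{j+1}) ∘ ⋯ ∘ (id - Φ_k) (1), computed iteratively:
    (D : ℕ → H →L[ℂ] H) (hD0 : D 0 = 1)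
    (hDsucc : ∀ j : Fin k, D (j + 1) = D j - ∑ s, T j s * D j * adjoint (T j s)) :
    (D k - ((1 : H →L[ℂ] H) - ∑ i, ∑ s, T i s * adjoint (T i s))).IsPositive ∧
    (D k).IsPositive := by
  have hΦ1 : ∑ i, conjSum (T i) 1 = ∑ i, ∑ s, T i s * adjoint (T i s) := by
    simp [conjSum_apply, star_eq_adjoint]
  obtain ⟨hlower, -⟩ := sub_sum_le_iterate_sub_map_and_le (fun i => conjSum (T i)) 1
    ((nonneg_iff_isPositive 1).2 isPositive_one) (hΦ1 ▸ (le_def _ _).2 hsum) D hD0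
    (by simpa [conjSum_apply, star_eq_adjoint] using hDsucc)
  rw [hΦ1] at hlower
  exact ⟨hlower, (nonneg_iff_isPositive _).1 ((nonneg_iff_isPositive _).2 hsum |>.trans hlower)⟩

theorem stmt12 {H : Type*} [NormedAddCommGroup H] [InnerProductSpace ℂ H] [CompleteSpace H]
    (k : ℕ) (n : Fin k → ℕ) (T : (i : Fin k) → Fin (n i) → H →L[ℂ] H)
    -- the maps Φ_i(X) = ∑_s T_{i,s} X T_{i,s}* pairwise commute
    (hcomm : ∀ (i j : Fin k) (X : H →L[ℂ] H),
      (∑ s, T i s * (∑ t, T j t * X * adjoint (T j t)) * adjoint (T i s)) =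
      (∑ t, T j t * (∑ s, T i s * X * adjoint (T i s)) * adjoint (T j t)))
    -- ∑_i Φ_i(1) ≤ 1
    (hsum : ((1 : H →L[ℂ] H) - ∑ i, ∑ s, T i s * adjoint (T i s)).IsPositive)
    -- D j is (id - Φ_{j+1}) ∘ ⋯ ∘ (id - Φ_k) (1), computed iteratively:
    (D : ℕ → H →L[ℂ] H) (hD0 : D 0 = 1)
    (hDsucc : ∀ j : Fin k, D (j + 1) = D j - ∑ s, T j s * D j * adjoint (T j s)) :
    (D k - ((1 : H →L[ℂ] H) - ∑ i, ∑ s, T i s * adjoint (T i s))).IsPositive ∧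
    (D k).IsPositive :=
  stmt12_general k n T hsum D hD0 hDsucc
end

section
/- Let M be a closed subspace of a Hilbert space K invariant under a contraction family: suppose S_1,…,S_n : K → K satisfy S_s M ⊆ M and adjoint(S_s) ∘ S_t = δ_{st} • 1 (orthogonal-range isometries). Then P_M − ∑_s S_s P_M S_s* ≥ 0, where P_M is the orthogonal projection onto M. -/
/-!
Write `P` for the projection onto `M`. Invariance of `M` under `S s` says `P * S s * P = S s * P`,
which forces `S s * P * (S s)* = P * (S s * P * (S s)*) * P`. The relations `(S s)* * S t = δ s t`
make `∑ s, S s * (S s)*` a projection, so `∑ s, S s * P * (S s)* ≤ ∑ s, S s * (S s)* ≤ 1`;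
compressing this inequality by `P` gives `∑ s, S s * P * (S s)* ≤ P` in the Loewner order.
-/

open ContinuousLinearMap

section StarRing

variable {R ι : Type*} [Ring R] [StarRing R] [DecidableEq ι]

theorem orthogonalIdempotents_mul_star {v : ι → R}
    (hv : ∀ i j, star (v i) * v j = if i = j then 1 else 0) :
    OrthogonalIdempotents fun i ↦ v i * star (v i) := by
  refine OrthogonalIdempotents.iff_mul_eq.mpr fun i j ↦ ?_
  rw [mul_assoc, ← mul_assoc (star (v i)), hv]
  rcases eq_or_ne i j with rfl | hij <;> simp [*]

theorem isStarProjection_sum_mul_star [Fintype ι] {v : ι → R}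
    (hv : ∀ i j, star (v i) * v j = if i = j then 1 else 0) :
    IsStarProjection (∑ i, v i * star (v i)) where
  isIdempotentElem := (orthogonalIdempotents_mul_star hv).isIdempotentElem_sum
  isSelfAdjoint := isSelfAdjoint_sum _ fun i _ ↦ .mul_star_self (v i)

theorem IsSelfAdjoint.conj_mul_mul_star_eq {p s : R} (hp : IsSelfAdjoint p)
    (hs : p * s * p = s * p) : p * (s * p * star s) * p = s * p * star s := by
  have hs' : p * star s * p = p * star s := by
    simpa [mul_assoc, hp.star_eq] using congr_arg star hs
  calc p * (s * p * star s) * p = (p * s * p) * star s * p := by noncomm_ring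
    _ = s * (p * star s * p) := by rw [hs]; noncomm_ring
    _ = s * p * star s := by rw [hs', mul_assoc]

theorem IsStarProjection.sum_mul_mul_star_le [Fintype ι] [PartialOrder R] [StarOrderedRing R]
    {p : R} (hp : IsStarProjection p) {v : ι → R}
    (hv : ∀ i j, star (v i) * v j = if i = j then 1 else 0) (hinv : ∀ i, p * v i * p = v i * p) :
    ∑ i, v i * p * star (v i) ≤ p := by
  set X := ∑ i, v i * p * star (v i)
  have hX : p * X * p = X := by
    simp only [X, Finset.mul_sum, Finset.sum_mul, hp.isSelfAdjoint.conj_mul_mul_star_eq (hinv _)]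
  have hX_le : X ≤ 1 := calc
    X ≤ ∑ i, v i * 1 * star (v i) :=
      Finset.sum_le_sum fun i _ ↦ star_right_conjugate_le_conjugate hp.le_one (v i)
    _ ≤ 1 := by simpa using (isStarProjection_sum_mul_star hv).le_one
  calc X = p * X * p := hX.symm
    _ ≤ p * 1 * p := hp.isSelfAdjoint.conjugate_le_conjugate hX_le
    _ = p := by rw [mul_one, hp.isIdempotentElem.eq]

end StarRing

theorem stmt18 {K : Type*} [NormedAddCommGroup K] [InnerProductSpace ℂ K] [CompleteSpace K]
    (n : ℕ) (S : Fin n → K →L[ℂ] K)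
    (horth : ∀ s t, adjoint (S s) * S t = if s = t then 1 else 0)
    (M : Submodule ℂ K) [CompleteSpace M]
    (hinv : ∀ s, ∀ x ∈ M, S s x ∈ M) :
    ((M.subtypeL ∘L M.orthogonalProjection) -
      ∑ s, S s * (M.subtypeL ∘L M.orthogonalProjection) * adjoint (S s)).IsPositive := by
  have hP : IsStarProjection M.starProjection := isStarProjection_starProjection
  have hinvP (s : Fin n) : M.starProjection * S s * M.starProjection = S s * M.starProjection :=
    hP.isIdempotentElem.conj_eq_of_range_mem_invtSubmodule <| by
      rw [Submodule.range_starProjection]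
      exact hinv s
  have hle : ∑ s, S s * M.starProjection * adjoint (S s) ≤ M.starProjection := by
    simpa only [star_eq_adjoint] using
      hP.sum_mul_mul_star_le (by simpa only [star_eq_adjoint] using horth) hinvP
  exact (nonneg_iff_isPositive _).mp (sub_nonneg.mpr hle)
end
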